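/- arXiv:2507.22678 — 2 statements merged into one kernel-verified Lean document; each statement's English description precedes it below -/
import Mathlib

section
/- Let Ω ⊆ ℂ be an open set and φ₁, φ₂ : ℂ → ℂ holomorphic functions on Ω. Then the function u(z) = Re( conj(z) · φ₁(z) + φ₂(z) ) is infinitely differentiable on Ω and satisfies the biharmonic equation ∇⁴u = ∂⁴u/∂x⁴ + 2 ∂⁴u/∂x²∂y² + ∂⁴u/∂y⁴ = 0 on Ω, where partial derivatives are directional derivatives along 1 and i. -/
open Complex

noncomputable def ld (v : ℂ) (f : ℂ → ℝ) (z : ℂ) : ℝ := lineDeriv ℝ f z v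

noncomputable def P (a b : ℂ → ℂ) : ℂ → ℝ := fun w => ((starRingEnd ℂ) w * a w + b w).re

lemma ld_congrOn {Ω : Set ℂ} (hΩo : IsOpen Ω) {f g : ℂ → ℝ} (h : ∀ w ∈ Ω, f w = g w)
    {z : ℂ} (hz : z ∈ Ω) (v : ℂ) : ld v f z = ld v g z := by
  unfold ld
  apply Filter.EventuallyEq.lineDeriv_eq
  filter_upwards [hΩo.mem_nhds hz] with w hw using h w hw

lemma derivDiff {Ω : Set ℂ} (hΩo : IsOpen Ω) {a : ℂ → ℂ} (ha : DifferentiableOn ℂ a Ω) :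
    DifferentiableOn ℂ (deriv a) Ω :=
  ((ha.analyticOnNhd hΩo).deriv).differentiableOn

lemma smoothP {Ω : Set ℂ} (hΩo : IsOpen Ω) {a b : ℂ → ℂ}
    (ha : DifferentiableOn ℂ a Ω) (hb : DifferentiableOn ℂ b Ω) :
    ContDiffOn ℝ (⊤ : ℕ∞) (P a b) Ω := by
  have hca : ContDiffOn ℝ (⊤ : ℕ∞) a Ω := (ha.contDiffOn hΩo).restrict_scalars ℝ
  have hcb : ContDiffOn ℝ (⊤ : ℕ∞) b Ω := (hb.contDiffOn hΩo).restrict_scalars ℝ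
  have hconj : ContDiff ℝ (⊤ : ℕ∞) (fun w : ℂ => (starRingEnd ℂ) w) := by
    have := Complex.conjCLE.contDiff (n := (⊤ : ℕ∞))
    exact this
  exact Complex.reCLM.contDiff.comp_contDiffOn ((hconj.contDiffOn.mul hca).add hcb)

lemma keyDeriv {Ω : Set ℂ} (hΩo : IsOpen Ω) {a b : ℂ → ℂ}
    (ha : DifferentiableOn ℂ a Ω) (hb : DifferentiableOn ℂ b Ω) (v : ℂ) {z : ℂ} (hz : z ∈ Ω) :
    ld v (P a b) z
      = ((starRingEnd ℂ) v * a z + ((starRingEnd ℂ) z * deriv a z + deriv b z) * v).re := by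
  have haz : DifferentiableAt ℂ a z := ha.differentiableAt (hΩo.mem_nhds hz)
  have hbz : DifferentiableAt ℂ b z := hb.differentiableAt (hΩo.mem_nhds hz)
  have hA : HasFDerivAt a (((1 : ℂ →L[ℂ] ℂ).smulRight (deriv a z)).restrictScalars ℝ) z :=
    (haz.hasDerivAt.hasFDerivAt).restrictScalars ℝ
  have hB : HasFDerivAt b (((1 : ℂ →L[ℂ] ℂ).smulRight (deriv b z)).restrictScalars ℝ) z :=
    (hbz.hasDerivAt.hasFDerivAt).restrictScalars ℝ
  have hc : HasFDerivAt (fun w => (starRingEnd ℂ) w) (conjCLE.toContinuousLinearMap) z :=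
    conjCLE.toContinuousLinearMap.hasFDerivAt
  have hF := ((hc.mul hA).add hB)
  have hL := (Complex.reCLM.hasFDerivAt.comp z hF).hasLineDerivAt v
  have := hL.lineDeriv
  unfold ld P
  rw [show (fun w => ((starRingEnd ℂ) w * a w + b w).re)
      = (⇑Complex.reCLM ∘ ((fun w => (starRingEnd ℂ) w) * a + b)) from rfl, this]
  simp [ContinuousLinearMap.smulRight_apply, Complex.add_re, Complex.mul_re, Complex.mul_im]
  ring

lemma stepX {Ω : Set ℂ} (hΩo : IsOpen Ω) {a b a' b' : ℂ → ℂ}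
    (ha : DifferentiableOn ℂ a Ω) (hb : DifferentiableOn ℂ b Ω)
    (ha' : ∀ z ∈ Ω, deriv a z = a' z) (hb' : ∀ z ∈ Ω, a z + deriv b z = b' z) :
    ∀ z ∈ Ω, ld 1 (P a b) z = P a' b' z := by
  intro z hz
  rw [keyDeriv hΩo ha hb 1 hz]
  unfold P
  rw [← ha' z hz, ← hb' z hz]
  congr 1
  simp only [map_one]
  ring

lemma stepY {Ω : Set ℂ} (hΩo : IsOpen Ω) {a b a' b' : ℂ → ℂ}
    (ha : DifferentiableOn ℂ a Ω) (hb : DifferentiableOn ℂ b Ω)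
    (ha' : ∀ z ∈ Ω, Complex.I * deriv a z = a' z)
    (hb' : ∀ z ∈ Ω, Complex.I * deriv b z - Complex.I * a z = b' z) :
    ∀ z ∈ Ω, ld Complex.I (P a b) z = P a' b' z := by
  intro z hz
  rw [keyDeriv hΩo ha hb Complex.I hz]
  unfold P
  rw [← ha' z hz, ← hb' z hz]
  congr 1
  rw [Complex.conj_I]
  ring

/-- Forward direction of Goursat's representation: `u = Re(conj z · φ₁ z + φ₂ z)` with
`φ₁, φ₂` holomorphic on `Ω` is infinitely differentiable and biharmonic on `Ω`. -/
theorem goursat_forward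
    (Ω : Set ℂ) (hΩo : IsOpen Ω) (φ₁ φ₂ : ℂ → ℂ)
    (hφ₁ : DifferentiableOn ℂ φ₁ Ω) (hφ₂ : DifferentiableOn ℂ φ₂ Ω)
    (u : ℂ → ℝ) (hu : ∀ z, u z = ((starRingEnd ℂ) z * φ₁ z + φ₂ z).re) :
    ContDiffOn ℝ (⊤ : ℕ∞) u Ω ∧ ∀ z ∈ Ω,
      ld 1 (ld 1 (ld 1 (ld 1 u))) z
        + 2 * ld 1 (ld 1 (ld Complex.I (ld Complex.I u))) z
        + ld Complex.I (ld Complex.I (ld Complex.I (ld Complex.I u))) z = 0 := by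
  have huP : u = P φ₁ φ₂ := funext hu
  -- iterated derivatives
  set p0 := φ₁ with hp0def
  set q0 := φ₂ with hq0def
  set p1 := deriv p0 with hp1def
  set p2 := deriv p1 with hp2def
  set p3 := deriv p2 with hp3def
  set p4 := deriv p3 with hp4def
  set q1 := deriv q0 with hq1def
  set q2 := deriv q1 with hq2def
  set q3 := deriv q2 with hq3def
  set q4 := deriv q3 with hq4def
  have hp0 : DifferentiableOn ℂ p0 Ω := hφ₁
  have hq0 : DifferentiableOn ℂ q0 Ω := hφ₂
  have hp1 : DifferentiableOn ℂ p1 Ω := derivDiff hΩo hp0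
  have hp2 : DifferentiableOn ℂ p2 Ω := derivDiff hΩo hp1
  have hp3 : DifferentiableOn ℂ p3 Ω := derivDiff hΩo hp2
  have hq1 : DifferentiableOn ℂ q1 Ω := derivDiff hΩo hq0
  have hq2 : DifferentiableOn ℂ q2 Ω := derivDiff hΩo hq1
  have hq3 : DifferentiableOn ℂ q3 Ω := derivDiff hΩo hq2
  have dat : ∀ (f : ℂ → ℂ), DifferentiableOn ℂ f Ω → ∀ z ∈ Ω, DifferentiableAt ℂ f z :=
    fun f hf z hz => hf.differentiableAt (hΩo.mem_nhds hz)
  constructor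
  · rw [huP]; exact smoothP hΩo hφ₁ hφ₂
  intro z hz
  -- X chain
  have EX1 : ∀ w ∈ Ω, ld 1 u w = P p1 (fun w => p0 w + q1 w) w := by
    intro w hw
    rw [huP]
    exact stepX hΩo hp0 hq0 (fun _ _ => rfl) (fun _ _ => rfl) w hw
  have EX2 : ∀ w ∈ Ω, ld 1 (ld 1 u) w = P p2 (fun w => 2 * p1 w + q2 w) w := by
    intro w hw
    rw [ld_congrOn hΩo EX1 hw 1]
    refine stepX hΩo hp1 (hp0.add hq1) (fun _ _ => rfl) ?_ w hw
    intro x hx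
    rw [deriv_add (dat _ hp0 _ hx) (dat _ hq1 _ hx)]
    ring
  have EX3 : ∀ w ∈ Ω, ld 1 (ld 1 (ld 1 u)) w = P p3 (fun w => 3 * p2 w + q3 w) w := by
    intro w hw
    rw [ld_congrOn hΩo EX2 hw 1]
    refine stepX hΩo hp2 ((hp1.const_mul (2:ℂ)).add hq2) (fun _ _ => rfl) ?_ w hw
    intro x hx
    rw [deriv_add ((dat _ hp1 _ hx).const_mul 2) (dat _ hq2 _ hx), deriv_const_mul 2 (dat _ hp1 _ hx)]
    ring
  have EX4 : ∀ w ∈ Ω, ld 1 (ld 1 (ld 1 (ld 1 u))) w = P p4 (fun w => 4 * p3 w + q4 w) w := by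
    intro w hw
    rw [ld_congrOn hΩo EX3 hw 1]
    refine stepX hΩo hp3 ((hp2.const_mul (3:ℂ)).add hq3) (fun _ _ => rfl) ?_ w hw
    intro x hx
    rw [deriv_add ((dat _ hp2 _ hx).const_mul 3) (dat _ hq3 _ hx), deriv_const_mul 3 (dat _ hp2 _ hx)]
    ring
  -- Y chain (two steps, shared)
  have EY1 : ∀ w ∈ Ω, ld Complex.I u w
      = P (fun w => Complex.I * p1 w) (fun w => Complex.I * q1 w - Complex.I * p0 w) w := by
    intro w hw
    rw [huP]
    exact stepY hΩo hp0 hq0 (fun _ _ => rfl) (fun _ _ => rfl) w hw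
  have EY2 : ∀ w ∈ Ω, ld Complex.I (ld Complex.I u) w
      = P (fun w => -p2 w) (fun w => 2 * p1 w - q2 w) w := by
    intro w hw
    rw [ld_congrOn hΩo EY1 hw Complex.I]
    refine stepY hΩo (hp1.const_mul Complex.I)
      ((hq1.const_mul Complex.I).sub (hp0.const_mul Complex.I)) ?_ ?_ w hw
    · intro x hx
      rw [deriv_const_mul Complex.I (dat _ hp1 _ hx)]
      have : Complex.I * Complex.I = -1 := Complex.I_mul_I
      ring_nf
      rw [Complex.I_sq]
      ring
    · intro x hx
      rw [deriv_sub ((dat _ hq1 _ hx).const_mul Complex.I) ((dat _ hp0 _ hx).const_mul Complex.I),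
        deriv_const_mul Complex.I (dat _ hq1 _ hx), deriv_const_mul Complex.I (dat _ hp0 _ hx)]
      ring_nf
      rw [Complex.I_sq]
      ring
  -- term 2: X X Y Y
  have EM3 : ∀ w ∈ Ω, ld 1 (ld Complex.I (ld Complex.I u)) w
      = P (fun w => -p3 w) (fun w => p2 w - q3 w) w := by
    intro w hw
    rw [ld_congrOn hΩo EY2 hw 1]
    refine stepX hΩo (hp2.neg) ((hp1.const_mul (2:ℂ)).sub hq2) ?_ ?_ w hw
    · intro x hx
      rw [deriv.neg]
    · intro x hx
      rw [deriv_sub ((dat _ hp1 _ hx).const_mul 2) (dat _ hq2 _ hx), deriv_const_mul 2 (dat _ hp1 _ hx)]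
      simp only [Pi.neg_apply]
      ring
  have EM4 : ∀ w ∈ Ω, ld 1 (ld 1 (ld Complex.I (ld Complex.I u))) w
      = P (fun w => -p4 w) (fun w => -q4 w) w := by
    intro w hw
    rw [ld_congrOn hΩo EM3 hw 1]
    refine stepX hΩo (hp3.neg) (hp2.sub hq3) ?_ ?_ w hw
    · intro x hx
      rw [deriv.neg]
    · intro x hx
      rw [deriv_sub (dat _ hp2 _ hx) (dat _ hq3 _ hx)]
      simp only [Pi.neg_apply]
      ring
  -- term 3: Y Y Y Y
  have EY3 : ∀ w ∈ Ω, ld Complex.I (ld Complex.I (ld Complex.I u)) w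
      = P (fun w => -(Complex.I * p3 w)) (fun w => Complex.I * (3 * p2 w - q3 w)) w := by
    intro w hw
    rw [ld_congrOn hΩo EY2 hw Complex.I]
    refine stepY hΩo (hp2.neg) ((hp1.const_mul (2:ℂ)).sub hq2) ?_ ?_ w hw
    · intro x hx
      rw [deriv.neg]
      ring
    · intro x hx
      rw [deriv_sub ((dat _ hp1 _ hx).const_mul 2) (dat _ hq2 _ hx), deriv_const_mul 2 (dat _ hp1 _ hx)]
      simp only [Pi.neg_apply]
      ring
  have EY4 : ∀ w ∈ Ω, ld Complex.I (ld Complex.I (ld Complex.I (ld Complex.I u))) w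
      = P p4 (fun w => q4 w - 4 * p3 w) w := by
    intro w hw
    rw [ld_congrOn hΩo EY3 hw Complex.I]
    refine stepY hΩo ((hp3.const_mul Complex.I).neg)
      (((hp2.const_mul (3:ℂ)).sub hq3).const_mul Complex.I) ?_ ?_ w hw
    · intro x hx
      rw [deriv.neg, deriv_const_mul Complex.I (dat _ hp3 _ hx)]
      ring_nf
      rw [Complex.I_sq]
      ring
    · intro x hx
      rw [deriv_const_mul Complex.I ((((dat _ hp2 _ hx).const_mul 3)).sub (dat _ hq3 _ hx)),
        deriv_sub ((dat _ hp2 _ hx).const_mul 3) (dat _ hq3 _ hx), deriv_const_mul 3 (dat _ hp2 _ hx)]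
      simp only [Pi.neg_apply]
      ring_nf
      rw [Complex.I_sq]
      ring
  rw [EX4 z hz, EM4 z hz, EY4 z hz]
  unfold P
  simp [Complex.add_re, Complex.mul_re, Complex.sub_re, Complex.neg_re, Complex.mul_im,
    Complex.sub_im, Complex.neg_im]
  ring
end

section
/- Let Ω ⊆ ℂ be an open set, φ₁, φ₂ : ℂ → ℂ holomorphic on Ω, let μ > 0 and λ̃ ∈ ℝ with λ̃ + μ ≠ 0, and set κ = (λ̃ + 3μ)/(λ̃ + μ). Define the displacement field u = (u_x, u_y) on Ω by u_x(z) = (1/(2μ)) Re( κ φ₁(z) − z · conj(φ₁'(z)) − conj(φ₂(z)) ) and u_y(z) = (1/(2μ)) Im( κ φ₁(z) − z · conj(φ₁'(z)) − conj(φ₂(z)) ), where φ₁' is the complex derivative of φ₁. Then u satisfies the homogeneous Navier equations of plane linear elasticity on Ω: μ ∇²u_x + (λ̃ + μ) ∂/∂x ( ∂u_x/∂x + ∂u_y/∂y ) = 0 and μ ∇²u_y + (λ̃ + μ) ∂/∂y ( ∂u_x/∂x + ∂u_y/∂y ) = 0, where ∇² = ∂²/∂x² + ∂²/∂y² and partial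 derivatives are directional derivatives along 1 and i. -/
open Complex ComplexConjugate Filter

def kmField (f g h : ℂ → ℂ) (z : ℂ) : ℂ := f z - z * conj (g z) - conj (h z)

-- `∂_u ∂_v (kmField f g h)` at `z`, see `hasLineDerivAt_lineDeriv_kmField`.
noncomputable def kmSecondDeriv (f g h : ℂ → ℂ) (z u v : ℂ) : ℂ :=
  u * v * deriv (deriv f) z - z * conj (u * v * deriv (deriv g) z)
    - conj ((conj u * v + u * conj v) * deriv g z + u * v * deriv (deriv h) z)

section LineDeriv

variable {𝕜 E F : Type*} [NontriviallyNormedField 𝕜] [NormedAddCommGroup E] [NormedSpace 𝕜 E]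
  [NormedAddCommGroup F] [NormedSpace 𝕜 F]

theorem HasDerivAt.hasLineDerivAt {𝕜' : Type*} [NontriviallyNormedField 𝕜'] [NormedAlgebra 𝕜 𝕜']
    [NormedSpace 𝕜' F] [IsScalarTower 𝕜 𝕜' F] {f : 𝕜' → F} {f' : F} {x : 𝕜'}
    (hf : HasDerivAt f f' x) (v : 𝕜') : HasLineDerivAt 𝕜 f (v • f') x v := by
  simpa using (hf.hasFDerivAt.restrictScalars 𝕜).hasLineDerivAt v

theorem HasLineDerivAt.add {f g : E → F} {f' g' : F} {x v : E} (hf : HasLineDerivAt 𝕜 f f' x v)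
    (hg : HasLineDerivAt 𝕜 g g' x v) : HasLineDerivAt 𝕜 (fun y => f y + g y) (f' + g') x v :=
  HasDerivAt.add hf hg

theorem ContinuousLinearMap.hasLineDerivAt_comp {G : Type*} [NormedAddCommGroup G]
    [NormedSpace 𝕜 G] (ℓ : F →L[𝕜] G) {f : E → F} {f' : F} {x v : E}
    (hf : HasLineDerivAt 𝕜 f f' x v) : HasLineDerivAt 𝕜 (ℓ ∘ f) (ℓ f') x v :=
  ℓ.hasFDerivAt.comp_hasDerivAt 0 hf

theorem ContinuousLinearMap.lineDeriv_comp {G : Type*} [NormedAddCommGroup G]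
    [NormedSpace 𝕜 G] (ℓ : F →L[𝕜] G) {f : E → F} {x v : E} (hf : LineDifferentiableAt 𝕜 f x v) :
    lineDeriv 𝕜 (ℓ ∘ f) x v = ℓ (lineDeriv 𝕜 f x v) :=
  (ℓ.hasLineDerivAt_comp hf.hasLineDerivAt).lineDeriv

end LineDeriv

theorem HasLineDerivAt.ld {f : ℂ → ℝ} {f' : ℝ} {z v : ℂ} (hf : HasLineDerivAt ℝ f f' z v) :
    ld v f z = f' :=
  hf.lineDeriv

theorem hasLineDerivAt_kmField {f g h : ℂ → ℂ} {f' g' h' z : ℂ} (hf : HasDerivAt f f' z)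
    (hg : HasDerivAt g g' z) (hh : HasDerivAt h h' z) (v : ℂ) :
    HasLineDerivAt ℝ (kmField f g h) (v * f' - z * conj (v * g') - conj (conj v * g z + v * h'))
      z v := by
  have hid : HasLineDerivAt ℝ id v z v := by
    simpa using (hasDerivAt_id z).hasLineDerivAt (𝕜 := ℝ) v
  -- `HasLineDerivAt` is `HasDerivAt` along `t ↦ z + t • v`, so one-variable rules apply.
  have hF := ((hf.hasLineDerivAt (𝕜 := ℝ) v).sub
    (hid.mul (hg.hasLineDerivAt (𝕜 := ℝ) v).star)).sub (hh.hasLineDerivAt (𝕜 := ℝ) v).star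
  refine hF.congr_deriv ?_
  simp only [zero_smul, add_zero, id_eq, RCLike.star_def, smul_eq_mul, map_mul, map_add,
    conj_conj]
  ring

theorem kmSecondDeriv_one_one_add_I_I (f g h : ℂ → ℂ) (z : ℂ) :
    kmSecondDeriv f g h z 1 1 + kmSecondDeriv f g h z I I = -4 * conj (deriv g z) := by
  simp only [kmSecondDeriv, map_add, map_mul, map_one, map_neg, conj_I, neg_neg]
  linear_combination
    (deriv (deriv f) z - z * conj (deriv (deriv g) z) + 2 * conj (deriv g z)
      - conj (deriv (deriv h) z)) * I_sq

theorem re_kmSecondDeriv_one_add_im_kmSecondDeriv_I (f g h : ℂ → ℂ) (z u : ℂ) :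
    (kmSecondDeriv f g h z u 1).re + (kmSecondDeriv f g h z u I).im
      = 2 * (u * (deriv (deriv f) z - deriv g z)).re := by
  simp only [kmSecondDeriv, mul_re, mul_im, add_re, add_im, sub_re, sub_im, conj_re, conj_im,
    I_re, I_im, one_re, one_im]
  ring

section Holomorphic

variable {f g h : ℂ → ℂ} {Ω : Set ℂ}

theorem hasLineDerivAt_kmField_of_differentiableOn (hΩ : IsOpen Ω) (hf : DifferentiableOn ℂ f Ω)
    (hg : DifferentiableOn ℂ g Ω) (hh : DifferentiableOn ℂ h Ω) {w : ℂ} (hw : w ∈ Ω) (v : ℂ) :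
    HasLineDerivAt ℝ (kmField f g h)
      (kmField (fun w => v * deriv f w) (fun w => v * deriv g w)
        (fun w => conj v * g w + v * deriv h w) w) w v :=
  have hasDerivAt {k : ℂ → ℂ} (hk : DifferentiableOn ℂ k Ω) : HasDerivAt k (deriv k w) w :=
    (hk.differentiableAt (hΩ.mem_nhds hw)).hasDerivAt
  hasLineDerivAt_kmField (hasDerivAt hf) (hasDerivAt hg) (hasDerivAt hh) v

theorem hasLineDerivAt_lineDeriv_kmField (hΩ : IsOpen Ω) (hf : DifferentiableOn ℂ f Ω)
    (hg : DifferentiableOn ℂ g Ω) (hh : DifferentiableOn ℂ h Ω) {z : ℂ} (hz : z ∈ Ω) (u v : ℂ) :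
    HasLineDerivAt ℝ (fun w => lineDeriv ℝ (kmField f g h) w v) (kmSecondDeriv f g h z u v)
      z u := by
  have hasDerivAt_deriv {k : ℂ → ℂ} (hk : DifferentiableOn ℂ k Ω) :
      HasDerivAt (deriv k) (deriv (deriv k) z) z :=
    ((hk.deriv hΩ).differentiableAt (hΩ.mem_nhds hz)).hasDerivAt
  have hD := hasLineDerivAt_kmField ((hasDerivAt_deriv hf).const_mul v)
    ((hasDerivAt_deriv hg).const_mul v)
    (((hg.differentiableAt (hΩ.mem_nhds hz)).hasDerivAt.const_mul (conj v)).add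
      ((hasDerivAt_deriv hh).const_mul v)) u
  have hD' : HasLineDerivAt ℝ (kmField _ _ _) (kmSecondDeriv f g h z u v) z u :=
    hD.congr_deriv (by simp only [kmSecondDeriv, map_add, map_mul, conj_conj]; ring)
  refine hD'.congr_of_eventuallyEq (eventually_of_mem (hΩ.mem_nhds hz) fun w hw => ?_)
  exact (hasLineDerivAt_kmField_of_differentiableOn hΩ hf hg hh hw v).lineDeriv

theorem hasLineDerivAt_ld_comp_kmField (hΩ : IsOpen Ω) (hf : DifferentiableOn ℂ f Ω)
    (hg : DifferentiableOn ℂ g Ω) (hh : DifferentiableOn ℂ h Ω) {z : ℂ} (hz : z ∈ Ω)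
    (ℓ : ℂ →L[ℝ] ℝ) (u v : ℂ) :
    HasLineDerivAt ℝ (ld v (ℓ ∘ kmField f g h)) (ℓ (kmSecondDeriv f g h z u v)) z u := by
  refine (ℓ.hasLineDerivAt_comp
    (hasLineDerivAt_lineDeriv_kmField hΩ hf hg hh hz u v)).congr_of_eventuallyEq ?_
  filter_upwards [hΩ.mem_nhds hz] with w hw
  exact ℓ.lineDeriv_comp
    (hasLineDerivAt_kmField_of_differentiableOn hΩ hf hg hh hw v).lineDifferentiableAt

theorem ld_ld_add_ld_ld_comp_kmField (hΩ : IsOpen Ω) (hf : DifferentiableOn ℂ f Ω)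
    (hg : DifferentiableOn ℂ g Ω) (hh : DifferentiableOn ℂ h Ω) {z : ℂ} (hz : z ∈ Ω)
    (ℓ : ℂ →L[ℝ] ℝ) :
    ld 1 (ld 1 (ℓ ∘ kmField f g h)) z + ld I (ld I (ℓ ∘ kmField f g h)) z
      = ℓ (-4 * conj (deriv g z)) := by
  rw [(hasLineDerivAt_ld_comp_kmField hΩ hf hg hh hz ℓ 1 1).ld,
    (hasLineDerivAt_ld_comp_kmField hΩ hf hg hh hz ℓ I I).ld, ← map_add,
    kmSecondDeriv_one_one_add_I_I]

theorem ld_divergence_kmField (hΩ : IsOpen Ω) (hf : DifferentiableOn ℂ f Ω)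
    (hg : DifferentiableOn ℂ g Ω) (hh : DifferentiableOn ℂ h Ω) {z : ℂ} (hz : z ∈ Ω)
    (c : ℝ) (u : ℂ) :
    ld u (fun w => ld 1 ((c • reCLM) ∘ kmField f g h) w + ld I ((c • imCLM) ∘ kmField f g h) w) z
      = c * (2 * (u * (deriv (deriv f) z - deriv g z)).re) := by
  rw [((hasLineDerivAt_ld_comp_kmField hΩ hf hg hh hz _ u 1).add
    (hasLineDerivAt_ld_comp_kmField hΩ hf hg hh hz _ u I)).ld,
    ← re_kmSecondDeriv_one_add_im_kmSecondDeriv_I f g h z u]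
  simp only [smul_apply, reCLM_apply, imCLM_apply, smul_eq_mul, mul_add]

end Holomorphic

theorem kolosov_muskhelishvili_displacements_general
    (Ω : Set ℂ) (hΩo : IsOpen Ω) (φ₁ φ₂ : ℂ → ℂ)
    (hφ₁ : DifferentiableOn ℂ φ₁ Ω) (hφ₂ : DifferentiableOn ℂ φ₂ Ω)
    (μ lam : ℝ) (hlam : lam + μ ≠ 0)
    (κ : ℝ) (hκ : κ = (lam + 3 * μ) / (lam + μ))
    (ux uy : ℂ → ℝ)
    (hux : ∀ z, ux z = (1 / (2 * μ)) *
      ((κ : ℂ) * φ₁ z - z * (starRingEnd ℂ) (deriv φ₁ z) - (starRingEnd ℂ) (φ₂ z)).re)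
    (huy : ∀ z, uy z = (1 / (2 * μ)) *
      ((κ : ℂ) * φ₁ z - z * (starRingEnd ℂ) (deriv φ₁ z) - (starRingEnd ℂ) (φ₂ z)).im) :
    ∀ z ∈ Ω,
      μ * (ld 1 (ld 1 ux) z + ld Complex.I (ld Complex.I ux) z)
        + (lam + μ) * ld 1 (fun w => ld 1 ux w + ld Complex.I uy w) z = 0 ∧
      μ * (ld 1 (ld 1 uy) z + ld Complex.I (ld Complex.I uy) z)
        + (lam + μ) * ld Complex.I (fun w => ld 1 ux w + ld Complex.I uy w) z = 0 := by
  intro z hz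
  have hf : DifferentiableOn ℂ (fun w => (κ : ℂ) * φ₁ w) Ω := hφ₁.const_mul _
  have hg : DifferentiableOn ℂ (deriv φ₁) Ω := hφ₁.deriv hΩo
  obtain rfl : ux = ((1 / (2 * μ)) • reCLM) ∘ kmField (fun w => (κ : ℂ) * φ₁ w) (deriv φ₁) φ₂ :=
    funext fun w => by simp [hux, kmField]
  obtain rfl : uy = ((1 / (2 * μ)) • imCLM) ∘ kmField (fun w => (κ : ℂ) * φ₁ w) (deriv φ₁) φ₂ :=
    funext fun w => by simp [huy, kmField]
  have hf'' : deriv (deriv fun w => (κ : ℂ) * φ₁ w) z = κ * deriv (deriv φ₁) z := by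
    simp only [deriv_const_mul_field']
  rw [ld_ld_add_ld_ld_comp_kmField hΩo hf hg hφ₂ hz, ld_ld_add_ld_ld_comp_kmField hΩo hf hg hφ₂ hz,
    ld_divergence_kmField hΩo hf hg hφ₂ hz, ld_divergence_kmField hΩo hf hg hφ₂ hz, hf'', hκ]
  constructor <;>
  · simp only [smul_apply, reCLM_apply, imCLM_apply, smul_eq_mul, mul_re, mul_im, sub_re, sub_im,
      conj_re, conj_im, ofReal_re, ofReal_im, one_re, one_im, I_re, I_im, neg_re, neg_im, re_ofNat,
      im_ofNat]
    field_simp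
    ring

/-- The Kolosov–Muskhelishvili displacement representation satisfies the homogeneous
Navier equations of plane linear elasticity. -/
theorem kolosov_muskhelishvili_displacements
    (Ω : Set ℂ) (hΩo : IsOpen Ω) (φ₁ φ₂ : ℂ → ℂ)
    (hφ₁ : DifferentiableOn ℂ φ₁ Ω) (hφ₂ : DifferentiableOn ℂ φ₂ Ω)
    (μ lam : ℝ) (hμ : 0 < μ) (hlam : lam + μ ≠ 0)
    (κ : ℝ) (hκ : κ = (lam + 3 * μ) / (lam + μ))
    (ux uy : ℂ → ℝ)
    (hux : ∀ z, ux z = (1 / (2 * μ)) *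
      ((κ : ℂ) * φ₁ z - z * (starRingEnd ℂ) (deriv φ₁ z) - (starRingEnd ℂ) (φ₂ z)).re)
    (huy : ∀ z, uy z = (1 / (2 * μ)) *
      ((κ : ℂ) * φ₁ z - z * (starRingEnd ℂ) (deriv φ₁ z) - (starRingEnd ℂ) (φ₂ z)).im) :
    ∀ z ∈ Ω,
      μ * (ld 1 (ld 1 ux) z + ld Complex.I (ld Complex.I ux) z)
        + (lam + μ) * ld 1 (fun w => ld 1 ux w + ld Complex.I uy w) z = 0 ∧
      μ * (ld 1 (ld 1 uy) z + ld Complex.I (ld Complex.I uy) z)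
        + (lam + μ) * ld Complex.I (fun w => ld 1 ux w + ld Complex.I uy w) z = 0 :=
  kolosov_muskhelishvili_displacements_general Ω hΩo φ₁ φ₂ hφ₁ hφ₂ μ lam hlam κ hκ ux uy hux huy
end
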